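/- arXiv:0802.4369 — 2 statements merged into one kernel-verified Lean document; each statement's English description precedes it below -/
import Mathlib

section
/- Let {H_x}_{x∈X} be a consistent selection of subgroups for the cocycle f, let U ⊆ G be open, C ⊆ G compact, and n ∈ ℤ fixed. Then the sets {y ∈ X : f(n,y)·H_y ∩ U·H_y ≠ ∅} and {y ∈ X : f(n,y)·H_y ∩ C·H_y = ∅} are both open in X. -/
open Topology Pointwise Set Filter

section Defs

variable {X : Type*} [TopologicalSpace X] {G : Type*} [TopologicalSpace G] [Group G]

/-- The positive-iterate part of the cocycle generated by `f` over `T`: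
`f(n,x) = f(T^{n-1}x) ⋯ f(Tx) · f(x)` for `n ≥ 1` and `f(0,x) = e`. -/
def cocycleNat (T : X ≃ₜ X) (f : X → G) : ℕ → X → G
  | 0, _ => 1
  | n + 1, x => f ((T.toEquiv ^ n) x) * cocycleNat T f n x

/-- The cocycle generated by `f` over `T`, at integer times:
`f(n,x)` as above for `n ≥ 0` and `f(n,x) = f(-n, T^n x)⁻¹` for `n < 0`. -/
def cocycle (T : X ≃ₜ X) (f : X → G) (n : ℤ) (x : X) : G :=
  if 0 ≤ n then cocycleNat T f n.toNat x
  else (cocycleNat T f (-n).toNat ((T.toEquiv ^ n) x))⁻¹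

/-- The `n`-th power of the skew product `T_f` on `X × G`:
`T_f^n (x,g) = (T^n x, f(n,x)·g)`. -/
def skewPow (T : X ≃ₜ X) (f : X → G) (n : ℤ) (p : X × G) : X × G :=
  ((T.toEquiv ^ n) p.1, cocycle T f n p.1 * p.2)

/-- The `n`-th power of the skew product `T_f` acting on `X × G/H`:
`T_f^n (x, gH) = (T^n x, f(n,x)·gH)`. -/
def skewPowQ (T : X ≃ₜ X) (f : X → G) (H : Subgroup G) (n : ℤ) (p : X × (G ⧸ H)) :
    X × (G ⧸ H) :=
  ((T.toEquiv ^ n) p.1, cocycle T f n p.1 • p.2)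

/-- The local essential range `E_x(f)`: all `g ∈ G` such that for every open
neighbourhood `U` of `x` and every open neighbourhood `V` of the identity there are
`n ∈ ℤ` and `y ∈ U ∩ T⁻ⁿU` with `f(n,y) ∈ V·g`. -/
def essRange (T : X ≃ₜ X) (f : X → G) (x : X) : Set G :=
  {g | ∀ U : Set X, IsOpen U → x ∈ U → ∀ V : Set G, IsOpen V → (1 : G) ∈ V →
    ∃ n : ℤ, ∃ y ∈ U, (T.toEquiv ^ n) y ∈ U ∧ ∃ v ∈ V, cocycle T f n y = v * g}

/-- `P_x(f)`: the vertical section at `x` of the closure of the `T_f`-orbit of `(x,e)`. -/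
def Pset (T : X ≃ₜ X) (f : X → G) (x : X) : Set G :=
  {g | (x, g) ∈ closure (Set.range fun n : ℤ => skewPow T f n (x, 1))}

/-- `𝒟(f) = {x : E_x(f) = P_x(f)}`. -/
def Dset (T : X ≃ₜ X) (f : X → G) : Set X :=
  {x | essRange T f x = Pset T f x}

/-- Topological recurrence of the cocycle generated by `f`: for every open
neighbourhood `V` of the identity of `G` and every nonempty open `U ⊆ X` there is
`n ≠ 0` with `T⁻ⁿU ∩ U ∩ {x : f(n,x) ∈ V} ≠ ∅`. -/
def IsRecurrentCocycle (T : X ≃ₜ X) (f : X → G) : Prop :=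
  ∀ V : Set G, IsOpen V → (1 : G) ∈ V → ∀ U : Set X, IsOpen U → U.Nonempty →
    ∃ n : ℤ, n ≠ 0 ∧ ∃ x ∈ U, (T.toEquiv ^ n) x ∈ U ∧ cocycle T f n x ∈ V

/-- Minimality of a homeomorphism: every orbit is dense. -/
def IsMinimal (T : X ≃ₜ X) : Prop :=
  ∀ x : X, Dense (Set.range fun n : ℤ => (T.toEquiv ^ n) x)

/-- A consistent selection of subgroups for the cocycle generated by `f`: a family of
closed subgroups `H x ⊆ E_x(f)` with `H (Tⁿx) = f(n,x)·(H x)·f(n,x)⁻¹` depending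
continuously on `x` for the Fell topology. -/
structure IsConsistentSelection (T : X ≃ₜ X) (f : X → G) (H : X → Subgroup G) : Prop where
  isClosed : ∀ x : X, IsClosed (H x : Set G)
  subset_essRange : ∀ x : X, (H x : Set G) ⊆ essRange T f x
  conj : ∀ (x : X) (n : ℤ), (H ((T.toEquiv ^ n) x) : Set G) =
    (fun h => cocycle T f n x * h * (cocycle T f n x)⁻¹) '' (H x : Set G)
  fell_compact : ∀ (x : X) (K : Set G), IsCompact K → K ∩ (H x : Set G) = ∅ →
    ∃ W ∈ 𝓝 x, ∀ y ∈ W, K ∩ (H y : Set G) = ∅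
  fell_open : ∀ (x : X) (O : Set G), IsOpen O → (O ∩ (H x : Set G)).Nonempty →
    ∃ W ∈ 𝓝 x, ∀ y ∈ W, (O ∩ (H y : Set G)).Nonempty

/-- The `T_f`-orbit closure of a point of `X × G`. -/
def orbitClosure (T : X ≃ₜ X) (f : X → G) (p : X × G) : Set (X × G) :=
  closure (Set.range fun n : ℤ => skewPow T f n p)

/-- For `C ⊆ X × G`, the set `H = {g : C·g⁻¹ = C}`, where `C·g = {(y, c·g) : (y,c) ∈ C}`. -/
def stabSet (C : Set (X × G)) : Set G :=
  {g : G | (fun p : X × G => (p.1, p.2 * g⁻¹)) '' C = C}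

/-- A strongly regular orbit closure: a `T_f`-orbit closure which projects onto all
of `X` and all of whose vertical sections are single left cosets of
`H = {g : C·g⁻¹ = C}`. -/
def IsStronglyRegularOC (T : X ≃ₜ X) (f : X → G) (C : Set (X × G)) : Prop :=
  (∃ p : X × G, C = orbitClosure T f p) ∧ Prod.fst '' C = Set.univ ∧
    ∀ x : X, ∃ gx : G, {g : G | (x, g) ∈ C} = {gx} * stabSet C

/-- A strongly regular cocycle: one whose skew product admits a strongly regular
orbit closure. -/
def IsStronglyRegularCocycle (T : X ≃ₜ X) (f : X → G) : Prop :=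
  ∃ C : Set (X × G), IsStronglyRegularOC T f C

/-- A regular cocycle: some `T_f`-orbit closure projects onto all of `X`. -/
def IsRegularCocycle (T : X ≃ₜ X) (f : X → G) : Prop :=
  ∃ p : X × G, Prod.fst '' orbitClosure T f p = Set.univ

end Defs

/-! Since `H y` is a subgroup, the coset `f(n,y)·H y` meets `U·H y` iff `f(n,y) ∈ U·H y`, and
misses `K·H y` iff the compact set `K⁻¹·f(n,y)` misses `H y`. The first condition is open by the
lower Fell condition and continuity of the cocycle. For the second, thicken `K⁻¹·f(n,y)` to a
compact neighbourhood still disjoint from the closed set `H y`; by the upper Fell condition it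
stays disjoint from `H z` for `z` near `y`, while `K⁻¹·f(n,z)` stays inside it. -/

theorem Homeomorph.continuous_toEquiv_zpow {X : Type*} [TopologicalSpace X] (T : X ≃ₜ X)
    (n : ℤ) : Continuous ⇑(T.toEquiv ^ n) := by
  let toPerm : (X ≃ₜ X) →* Equiv.Perm X :=
    { toFun := Homeomorph.toEquiv, map_one' := rfl, map_mul' := fun _ _ => rfl }
  rw [← show toPerm (T ^ n) = T.toEquiv ^ n from map_zpow toPerm T n]
  exact (T ^ n).continuous

section Cocycle

variable {X : Type*} [TopologicalSpace X] {G : Type*} [TopologicalSpace G] [Group G]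
  (T : X ≃ₜ X) {f : X → G}

theorem continuous_cocycleNat [ContinuousMul G] (hf : Continuous f) (m : ℕ) : Continuous (cocycleNat T f m) := by
  induction m with
  | zero => exact continuous_const
  | succ k ih =>
    have hTk : Continuous ⇑(T.toEquiv ^ k) := by
      simpa using T.continuous_toEquiv_zpow k
    exact (hf.comp hTk).mul ih

theorem continuous_cocycle [IsTopologicalGroup G] (hf : Continuous f) (n : ℤ) : Continuous (cocycle T f n) := by
  unfold cocycle
  split_ifs
  · exact continuous_cocycleNat T hf n.toNat
  · exact ((continuous_cocycleNat T hf (-n).toNat).comp (T.continuous_toEquiv_zpow n)).inv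

end Cocycle

theorem Subgroup.singleton_mul_inter_mul_nonempty_iff {G : Type*} [Group G] (H : Subgroup G)
    (c : G) (S : Set G) :
    (({c} * (H : Set G)) ∩ (S * (H : Set G))).Nonempty ↔ c ∈ S * (H : Set G) := by
  refine ⟨?_, fun hc => ⟨c, ⟨c, rfl, 1, H.one_mem, mul_one c⟩, hc⟩⟩
  rintro ⟨_, ⟨c', hc', h, hh, rfl⟩, hch⟩
  rw [Set.mem_singleton_iff.mp hc'] at hch
  have : c * h * h⁻¹ ∈ S * (H : Set G) * H := Set.mul_mem_mul hch (H.inv_mem hh)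
  rwa [mul_inv_cancel_right, mul_assoc, coe_mul_coe] at this

section Semicontinuity

variable {X : Type*} [TopologicalSpace X] {G : Type*} [TopologicalSpace G] [Group G]
  [IsTopologicalGroup G] {c : X → G} {S : X → Set G}

theorem isOpen_setOf_mem_mul (hc : Continuous c)
    (hS : ∀ x O, IsOpen O → (O ∩ S x).Nonempty → ∀ᶠ y in 𝓝 x, (O ∩ S y).Nonempty)
    {U : Set G} (hU : IsOpen U) : IsOpen {y | c y ∈ U * S y} := by
  rw [isOpen_iff_mem_nhds]
  rintro x ⟨u, hu, h, hh, hx⟩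
  have hdiv : ContinuousAt (fun p : G × G => p.1 * p.2⁻¹) (c x, h) := by fun_prop
  have hU' : (fun p : G × G => p.1 * p.2⁻¹) ⁻¹' U ∈ 𝓝 (c x, h) :=
    hdiv.preimage_mem_nhds (hU.mem_nhds (by simpa [← hx] using hu))
  obtain ⟨N, O, hN, hxN, hO, hhO, hNO⟩ := mem_nhds_prod_iff'.mp hU'
  filter_upwards [hc.continuousAt.preimage_mem_nhds (hN.mem_nhds hxN), hS x O hO ⟨h, hhO, hh⟩]
    with y hy ⟨h', hh'O, hh'⟩
  exact ⟨c y * h'⁻¹, hNO (Set.mk_mem_prod hy hh'O), h', hh', inv_mul_cancel_right _ _⟩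

theorem isOpen_setOf_notMem_mul [LocallyCompactSpace G] (hc : Continuous c)
    (hS_closed : ∀ x, IsClosed (S x))
    (hS : ∀ x L, IsCompact L → L ∩ S x = ∅ → ∀ᶠ y in 𝓝 x, L ∩ S y = ∅)
    {K : Set G} (hK : IsCompact K) : IsOpen {y | c y ∉ K * S y} := by
  rw [isOpen_iff_mem_nhds]
  intro x hx
  have hdisj : (fun k => k⁻¹ * c x) '' K ⊆ (S x)ᶜ := by
    rintro _ ⟨k, hk, rfl⟩ hkS
    exact hx ⟨k, hk, _, hkS, mul_inv_cancel_left k (c x)⟩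
  obtain ⟨L, hL, hKL, hLS⟩ :=
    exists_compact_between (hK.image (by fun_prop)) (hS_closed x).isOpen_compl hdisj
  have hnear : ∀ᶠ g in 𝓝 (c x), ∀ k ∈ K, k⁻¹ * g ∈ interior L :=
    hK.eventually_forall_of_forall_eventually fun k hk =>
      (by fun_prop : Continuous fun z : G × G => z.2⁻¹ * z.1).continuousAt.preimage_mem_nhds
        (isOpen_interior.mem_nhds (hKL ⟨k, hk, rfl⟩))
  filter_upwards [hc.continuousAt.eventually hnear,
    hS x L hL (subset_compl_iff_disjoint_right.mp hLS).inter_eq]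
    with y hyL hLy ⟨k, hk, s, hs, hks⟩
  have hs_eq : s = k⁻¹ * c y := by rw [← hks, inv_mul_cancel_left]
  exact Set.eq_empty_iff_forall_notMem.mp hLy s ⟨interior_subset (hs_eq ▸ hyL k hk), hs⟩

end Semicontinuity

theorem statement_2_general
    {X : Type*} [TopologicalSpace X]
    {G : Type*} [TopologicalSpace G] [Group G] [IsTopologicalGroup G]
    [LocallyCompactSpace G]
    (T : X ≃ₜ X) (f : X → G) (hf : Continuous f)
    (H : X → Subgroup G) (hH : IsConsistentSelection T f H)
    (U : Set G) (hUopen : IsOpen U) (K : Set G) (hK : IsCompact K) (n : ℤ) :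
    IsOpen {y : X |
        (({cocycle T f n y} * (H y : Set G)) ∩ (U * (H y : Set G))).Nonempty} ∧
      IsOpen {y : X |
        ({cocycle T f n y} * (H y : Set G)) ∩ (K * (H y : Set G)) = ∅} := by
  have hc := continuous_cocycle T hf n
  constructor
  · simp_rw [Subgroup.singleton_mul_inter_mul_nonempty_iff]
    exact isOpen_setOf_mem_mul hc
      (fun x O hO hne => eventually_iff_exists_mem.2 (hH.fell_open x O hO hne)) hUopen
  · simp_rw [← Set.not_nonempty_iff_eq_empty, Subgroup.singleton_mul_inter_mul_nonempty_iff]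
    exact isOpen_setOf_notMem_mul hc hH.isClosed
      (fun x L hL hdisj => eventually_iff_exists_mem.2 (hH.fell_compact x L hL hdisj)) hK

theorem statement_2
    {X : Type*} [TopologicalSpace X] [CompactSpace X] [TopologicalSpace.MetrizableSpace X]
    {G : Type*} [TopologicalSpace G] [Group G] [IsTopologicalGroup G]
    [LocallyCompactSpace G] [SecondCountableTopology G] [T2Space G]
    (T : X ≃ₜ X) (hT : IsMinimal T) (f : X → G) (hf : Continuous f)
    (H : X → Subgroup G) (hH : IsConsistentSelection T f H)
    (U : Set G) (hUopen : IsOpen U) (K : Set G) (hK : IsCompact K) (n : ℤ) :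
    IsOpen {y : X |
        (({cocycle T f n y} * (H y : Set G)) ∩ (U * (H y : Set G))).Nonempty} ∧
      IsOpen {y : X |
        ({cocycle T f n y} * (H y : Set G)) ∩ (K * (H y : Set G)) = ∅} :=
  statement_2_general T f hf H hH U hUopen K hK n
end

section
/- The map x ↦ E_x(f) is semi-continuous in the following sense: if x_k → x in X, g_k ∈ E_{x_k}(f) for every k, and g_k → g in G, then g ∈ E_x(f). -/
open Topology Pointwise Set Filter

/-! Replacing `V·g` by an arbitrary open neighbourhood `W` of `g` makes membership in `E_x(f)`
a condition on the open neighbourhoods `U ×ˢ W` of `(x, g)`, so the graph of `x ↦ E_x(f)` is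
closed in `X × G`. -/

section EssRange

variable {X : Type*} [TopologicalSpace X] {G : Type*} [TopologicalSpace G] [Group G]
  [ContinuousMul G] {T : X ≃ₜ X} {f : X → G}

theorem mem_essRange_iff {x : X} {g : G} :
    g ∈ essRange T f x ↔ ∀ U : Set X, IsOpen U → x ∈ U → ∀ W : Set G, IsOpen W → g ∈ W →
      ∃ n : ℤ, ∃ y ∈ U, (T.toEquiv ^ n) y ∈ U ∧ cocycle T f n y ∈ W := by
  constructor
  · intro hg U hU hxU W hW hgW
    obtain ⟨n, y, hyU, hTyU, v, hv, hcoc⟩ :=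
      hg U hU hxU ((· * g) ⁻¹' W) (hW.preimage (continuous_mul_const g)) (by simpa using hgW)
    exact ⟨n, y, hyU, hTyU, hcoc ▸ hv⟩
  · intro hg U hU hxU V hV hV1
    obtain ⟨n, y, hyU, hTyU, hW⟩ :=
      hg U hU hxU ((· * g⁻¹) ⁻¹' V) (hV.preimage (continuous_mul_const g⁻¹)) (by simpa using hV1)
    exact ⟨n, y, hyU, hTyU, _, hW, (inv_mul_cancel_right _ g).symm⟩

theorem isClosed_setOf_mem_essRange :
    IsClosed {p : X × G | p.2 ∈ essRange T f p.1} := by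
  refine isClosed_of_closure_subset fun p hp => mem_essRange_iff.2 ?_
  intro U hU hpU W hW hpW
  obtain ⟨q, ⟨hqU, hqW⟩, hq⟩ := mem_closure_iff.1 hp (U ×ˢ W) (hU.prod hW) ⟨hpU, hpW⟩
  exact mem_essRange_iff.1 hq U hU hqU W hW hqW

end EssRange

theorem statement_12_general
    {X : Type*} [TopologicalSpace X]
    {G : Type*} [TopologicalSpace G] [Group G] [IsTopologicalGroup G]
    (T : X ≃ₜ X) (f : X → G)
    (x : ℕ → X) (g : ℕ → G) (x₀ : X) (g₀ : G)
    (hx : Filter.Tendsto x Filter.atTop (𝓝 x₀))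
    (hg : ∀ k : ℕ, g k ∈ essRange T f (x k))
    (hgg : Filter.Tendsto g Filter.atTop (𝓝 g₀)) :
    g₀ ∈ essRange T f x₀ :=
  isClosed_setOf_mem_essRange.mem_of_tendsto (hx.prodMk_nhds hgg) (Eventually.of_forall hg)

theorem statement_12
    {X : Type*} [TopologicalSpace X] [CompactSpace X] [TopologicalSpace.MetrizableSpace X]
    {G : Type*} [TopologicalSpace G] [Group G] [IsTopologicalGroup G]
    [LocallyCompactSpace G] [SecondCountableTopology G] [T2Space G]
    (T : X ≃ₜ X) (hT : IsMinimal T) (f : X → G) (hf : Continuous f)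
    (x : ℕ → X) (g : ℕ → G) (x₀ : X) (g₀ : G)
    (hx : Filter.Tendsto x Filter.atTop (𝓝 x₀))
    (hg : ∀ k : ℕ, g k ∈ essRange T f (x k))
    (hgg : Filter.Tendsto g Filter.atTop (𝓝 g₀)) :
    g₀ ∈ essRange T f x₀ :=
  statement_12_general T f x g x₀ g₀ hx hg hgg
end
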